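/- Let $N = 2r+1$ be odd, let $n \geq 1$ with $n^* := n/\gcd(n,2)$ odd, and let $\mathfrak{p}$ be a partition of $2r$. Define $\mathfrak{q} = \left(\left(d^{(n^*)}_{\mathrm{com},A}(\mathfrak{p})\right)^+\right)_B$, i.e. apply the split map $d^{(n^*)}_{\mathrm{com},A}$, add $1$ to the largest part, then take the $B$-collapse. Then $\mathfrak{q}$ is a partition of $N$ in which every even part occurs with even multiplicity. -/

import Mathlib

/-- The multiset of parts of the partition `𝔰(m;n) = (n^{⌊m/n⌋}, m mod n)`,
with the remainder omitted when it is `0`. -/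
def sPart (n m : ℕ) : Multiset ℕ :=
  Multiset.replicate (m / n) n + (if m % n = 0 then 0 else {m % n})

/-- `d^{(n)}_{com,A}(𝔭)`: the multiset union of `𝔰(pᵢ;n)` over the parts `pᵢ` of `𝔭`. -/
def dcomA (n : ℕ) (p : Multiset ℕ) : Multiset ℕ :=
  p.bind (sPart n)

/-- The operation `(⋆)`: in a sequence read as consecutive pairs, every strictly decreasing
pair `(a, b)` with `a > b` is replaced by `(a - 1, b + 1)`; all other entries are unchanged. -/
def starOp : List ℕ → List ℕ
  | a :: b :: rest => if b < a then (a - 1) :: (b + 1) :: starOp rest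
                      else a :: b :: starOp rest
  | l => l

/-- The parts of a multiset listed in non-increasing order. -/
def descSort (s : Multiset ℕ) : List ℕ :=
  (Multiset.sort s (· ≤ ·)).reverse

/-- The even parts of `𝔭`, listed decreasingly, with a `0` appended if needed to make the
number of entries even. -/
def evenSeq (p : Multiset ℕ) : List ℕ :=
  let l := descSort (p.filter (fun x => x % 2 = 0))
  if l.length % 2 = 0 then l else l ++ [0]

/-- The `B`-collapse algorithm: apply `(⋆)` to the (zero-padded) decreasing sequence of even
parts of `𝔭`, recombine with the odd parts, and discard zeros. -/
def bCollapse (p : Multiset ℕ) : Multiset ℕ :=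
  ((starOp (evenSeq p) : List ℕ) : Multiset ℕ).filter (fun x => 0 < x)
    + p.filter (fun x => x % 2 = 1)

/-- The largest part of a multiset (or `0` if it is empty). -/
def maxPart (s : Multiset ℕ) : ℕ := s.fold max 0

/-- `𝔭⁺`: the partition obtained from `𝔭` by adding `1` to its largest part. -/
def mPlus (s : Multiset ℕ) : Multiset ℕ :=
  (maxPart s + 1) ::ₘ s.erase (maxPart s)

/-! Each step preserves the total except `⁺`, which adds one: `𝔰(m;n)` has sum
`n⌊m/n⌋ + m mod n = m`, and `(⋆)` only moves a unit inside a pair. The multiplicities come from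
the pairing in `(⋆)`: the even parts are read as consecutive pairs `(a, b)` of a decreasing
sequence, a pair with `a > b` becomes the two odd parts `a - 1, b + 1`, and a pair with `a = b`
contributes its value twice. Odd parts pass through unchanged. -/

theorem starOp_sum : ∀ l : List ℕ, (starOp l).sum = l.sum
  | [] => rfl
  | [_] => rfl
  | a :: b :: rest => by
    unfold starOp
    split
    · simp only [List.sum_cons, starOp_sum rest]
      omega
    · simp only [List.sum_cons, starOp_sum rest]

theorem even_count_starOp : ∀ {l : List ℕ}, Even l.length → l.Pairwise (· ≥ ·) →
    (∀ a ∈ l, Even a) → ∀ {x : ℕ}, Even x → Even ((starOp l).count x)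
  | [], _, _, _, _, _ => by simp [starOp]
  | [_], hlen, _, _, _, _ => by simp at hlen
  | a :: b :: rest, hlen, hsorted, heven, x, hx => by
    have hrest : Even ((starOp rest).count x) :=
      even_count_starOp (by simpa [Nat.even_add_one] using hlen) hsorted.of_cons.of_cons
        (fun c hc => heven c (by simp [hc])) hx
    have hba : b ≤ a := List.rel_of_pairwise_cons hsorted (by simp)
    obtain ⟨ha, hb⟩ : a % 2 = 0 ∧ b % 2 = 0 :=
      ⟨Nat.even_iff.1 (heven a (by simp)), Nat.even_iff.1 (heven b (by simp))⟩
    rw [Nat.even_iff] at hx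
    unfold starOp
    split
    · have ha' : a - 1 ≠ x := by omega
      have hb' : b + 1 ≠ x := by omega
      simpa [List.count_cons, ha', hb'] using hrest
    · obtain rfl : a = b := by omega
      by_cases hax : a = x
      · subst hax
        simpa [List.count_cons, parity_simps] using hrest
      · simpa [List.count_cons, hax] using hrest

theorem coe_descSort (s : Multiset ℕ) : (descSort s : Multiset ℕ) = s := by
  rw [descSort, Multiset.coe_reverse, Multiset.sort_eq]

theorem pairwise_descSort (s : Multiset ℕ) : (descSort s).Pairwise (· ≥ ·) :=
  List.pairwise_reverse.2 (Multiset.pairwise_sort s _)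

theorem coe_evenSeq (p : Multiset ℕ) :
    (evenSeq p : Multiset ℕ) = p.filter (fun x => x % 2 = 0) +
      if (descSort (p.filter (fun x => x % 2 = 0))).length % 2 = 0 then 0 else {0} := by
  dsimp only [evenSeq]
  split
  · rw [coe_descSort, add_zero]
  · rw [← Multiset.coe_add, coe_descSort]; rfl

theorem pairwise_evenSeq (p : Multiset ℕ) : (evenSeq p).Pairwise (· ≥ ·) := by
  dsimp only [evenSeq]
  split
  · exact pairwise_descSort _
  · exact List.pairwise_append.2 ⟨pairwise_descSort _, by simp, by simp⟩

theorem even_length_evenSeq (p : Multiset ℕ) : Even (evenSeq p).length := by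
  dsimp only [evenSeq]
  split
  · exact Nat.even_iff.2 ‹_›
  · simp only [List.length_append, List.length_singleton, Nat.even_add_one, Nat.even_iff]
    assumption

theorem even_of_mem_evenSeq {p : Multiset ℕ} {a : ℕ} (ha : a ∈ evenSeq p) : Even a := by
  rw [← Multiset.mem_coe, coe_evenSeq] at ha
  split at ha <;> simp only [Multiset.add_zero, Multiset.mem_add, Multiset.mem_filter,
    Multiset.mem_singleton] at ha <;> grind

theorem evenSeq_sum (p : Multiset ℕ) :
    (evenSeq p).sum = (p.filter (fun x => x % 2 = 0)).sum := by
  rw [← Multiset.sum_coe, coe_evenSeq]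
  split <;> simp

theorem Multiset.sum_filter_pos (s : Multiset ℕ) : (s.filter (0 < ·)).sum = s.sum := by
  rw [← Multiset.sum_filter_add_sum_filter_not (s := s) (0 < ·), left_eq_add]
  refine Multiset.sum_eq_zero fun x hx => ?_
  have := (Multiset.mem_filter.1 hx).2
  omega

theorem bCollapse_sum (p : Multiset ℕ) : (bCollapse p).sum = p.sum := by
  rw [bCollapse, Multiset.sum_add, Multiset.sum_filter_pos, Multiset.sum_coe, starOp_sum,
    evenSeq_sum, ← Multiset.sum_filter_add_sum_filter_not (s := p) (fun x => x % 2 = 0)]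
  congr 2
  exact Multiset.filter_congr fun x _ => by omega

theorem pos_of_mem_bCollapse {p : Multiset ℕ} {x : ℕ} (hx : x ∈ bCollapse p) : 0 < x := by
  rcases Multiset.mem_add.1 hx with h | h
  · exact (Multiset.mem_filter.1 h).2
  · have := (Multiset.mem_filter.1 h).2
    omega

theorem even_count_bCollapse (p : Multiset ℕ) {x : ℕ} (hx : Even x) :
    Even ((bCollapse p).count x) := by
  have hodd : x ∉ p.filter (fun x => x % 2 = 1) := fun h => by
    have := (Multiset.mem_filter.1 h).2
    rw [Nat.even_iff] at hx
    omega
  rw [bCollapse, Multiset.count_add, Multiset.count_filter, Multiset.count_eq_zero.2 hodd,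
    Multiset.coe_count]
  split
  · exact even_count_starOp (even_length_evenSeq p) (pairwise_evenSeq p)
      (fun _ => even_of_mem_evenSeq) hx
  · exact .zero

theorem maxPart_mem {s : Multiset ℕ} (hs : s ≠ 0) : maxPart s ∈ s := by
  induction s using Multiset.induction with
  | empty => exact absurd rfl hs
  | cons a t ih =>
    unfold maxPart at *
    rw [Multiset.fold_cons_left]
    rcases eq_or_ne t 0 with rfl | ht
    · simp
    · rcases max_choice a (t.fold max 0) with h | h <;> rw [h]
      · exact Multiset.mem_cons_self a t
      · exact Multiset.mem_cons_of_mem (ih ht)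

theorem mPlus_sum (s : Multiset ℕ) : (mPlus s).sum = s.sum + 1 := by
  rcases eq_or_ne s 0 with rfl | hs
  · rfl
  · rw [mPlus, Multiset.sum_cons, ← Multiset.sum_erase (maxPart_mem hs)]
    ring

theorem sPart_sum (n m : ℕ) : (sPart n m).sum = m := by
  rw [sPart, Multiset.sum_add, Multiset.sum_replicate, smul_eq_mul]
  split_ifs with h
  · simpa [h] using Nat.div_mul_cancel (Nat.dvd_of_mod_eq_zero h)
  · simpa using Nat.div_add_mod' m n

theorem dcomA_sum (n : ℕ) (p : Multiset ℕ) : (dcomA n p).sum = p.sum := by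
  rw [dcomA, Multiset.sum_bind]
  simp [sPart_sum]

theorem stmt19_general (r n : ℕ) (p : Multiset ℕ) (hsum : p.sum = 2 * r) :
    (bCollapse (mPlus (dcomA (n / Nat.gcd n 2) p))).sum = 2 * r + 1 ∧
    (∀ x ∈ bCollapse (mPlus (dcomA (n / Nat.gcd n 2) p)), 0 < x) ∧
    (∀ x ∈ bCollapse (mPlus (dcomA (n / Nat.gcd n 2) p)), Even x →
      Even ((bCollapse (mPlus (dcomA (n / Nat.gcd n 2) p))).count x)) := by
  refine ⟨?_, fun _ => pos_of_mem_bCollapse, fun _ _ => even_count_bCollapse _⟩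
  rw [bCollapse_sum, mPlus_sum, dcomA_sum, hsum]

/-- Let `N = 2r+1` be odd, `n ≥ 1` with `n* = n / gcd(n,2)` odd, and let `𝔭` be a partition of
`2r`.  Then `𝔮 = ((d^{(n*)}_{com,A}(𝔭))⁺)_B` — split, add `1` to the largest part, then take the
`B`-collapse — is a partition of `N` in which every even part occurs with even multiplicity. -/
theorem stmt19 (r n : ℕ) (hn : 1 ≤ n) (hodd : Odd (n / Nat.gcd n 2))
    (p : Multiset ℕ) (hpos : ∀ x ∈ p, 0 < x) (hsum : p.sum = 2 * r) :
    (bCollapse (mPlus (dcomA (n / Nat.gcd n 2) p))).sum = 2 * r + 1 ∧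
    (∀ x ∈ bCollapse (mPlus (dcomA (n / Nat.gcd n 2) p)), 0 < x) ∧
    (∀ x ∈ bCollapse (mPlus (dcomA (n / Nat.gcd n 2) p)), Even x →
      Even ((bCollapse (mPlus (dcomA (n / Nat.gcd n 2) p))).count x)) :=
  stmt19_general r n p hsum
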